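/- arXiv:2106.00735 — 3 statements merged into one kernel-verified Lean document; each statement's English description precedes it below -/
import Mathlib

section
/- Let n = 2 and m ≥ 3. Every 3×3 minor of the m×4 matrix T whose k-th row is (x_{11}^{(k)}, x_{12}^{(k)}, x_{21}^{(k)}, x_{22}^{(k)}) vanishes at every point of Sing_{2,m}, i.e. belongs to the vanishing ideal I_{2,m}. -/
/-!
In the coordinates `(a₁₁, a₁₂, a₂₁, a₂₂)` of `ℂ⁴`, the determinant of a `2 × 2` matrix is a
nondegenerate quadratic form. At a point of `Sing_{2,m}` we have
`det (A_p + A_q) = det A_p = det A_q = 0`, so the polar form of `det` vanishes on every pair of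
rows of `T`: the rows span a totally isotropic subspace, which has dimension at most `2`.
Hence `T` has rank at most `2` there, and all its `3 × 3` minors vanish.
-/

open MvPolynomial Matrix

noncomputable section

/-- `Sing_{n,m}`: tuples of `n × n` complex matrices (encoded as points of
`ℂ^(m × n × n)`) all of whose linear combinations are singular. -/
def SingSet (n m : ℕ) : Set ((Fin m × Fin n × Fin n) → ℂ) :=
  { x | ∀ lam : Fin m → ℂ,
      (Matrix.of fun i j : Fin n => ∑ k : Fin m, lam k * x (k, i, j)).det = 0 }

/-- The vanishing ideal `I_{n,m}` of `Sing_{n,m}`. -/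
def singIdeal (n m : ℕ) : Ideal (MvPolynomial (Fin m × Fin n × Fin n) ℂ) :=
  MvPolynomial.vanishingIdeal ℂ (SingSet n m)

/-- The polynomial `det (λ₁ X⁽¹⁾ + ⋯ + λ_m X⁽ᵐ⁾)`. -/
def detPoly (n m : ℕ) (lam : Fin m → ℂ) : MvPolynomial (Fin m × Fin n × Fin n) ℂ :=
  (Matrix.of fun i j : Fin n =>
    ∑ k : Fin m, MvPolynomial.C (lam k) * MvPolynomial.X (k, i, j)).det

/-- The column indexing of the `m × 4` matrix `T` whose `k`-th row is
`(x₁₁⁽ᵏ⁾, x₁₂⁽ᵏ⁾, x₂₁⁽ᵏ⁾, x₂₂⁽ᵏ⁾)`. -/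
def pairIdx : Fin 4 → Fin 2 × Fin 2 := ![(0, 0), (0, 1), (1, 0), (1, 1)]

namespace Matrix

variable {K : Type*} [Field K] {m n : Type*} [Fintype n]

theorem two_mul_rank_le_card_of_mul_mul_transpose_eq_zero [Fintype m] [DecidableEq n]
    {V : Matrix m n K} {Q : Matrix n n K} (hQ : IsUnit Q.det) (h : V * Q * Vᵀ = 0) :
    2 * V.rank ≤ Fintype.card n := by
  have := rank_add_rank_le_card_of_mul_eq_zero (A := V) (B := Q * Vᵀ)
    (by rwa [← Matrix.mul_assoc])
  rwa [rank_mul_eq_right_of_isUnit_det _ _ hQ, rank_transpose, ← two_mul] at this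

theorem det_submatrix_eq_zero_of_rank_lt {ι : Type*} [Fintype ι] [DecidableEq ι]
    (V : Matrix m n K) (r : ι → m) (c : ι → n) (h : V.rank < Fintype.card ι) :
    (V.submatrix r c).det = 0 := by
  by_contra hdet
  have := rank_submatrix_le V r c
  rw [rank_of_det_ne_zero hdet] at this
  omega

end Matrix

/-- Gram matrix of the polar form `det (A + B) - det A - det B` in the coordinates
`(a₁₁, a₁₂, a₂₁, a₂₂)`. -/
def detPolarMatrix (R : Type*) [CommRing R] : Matrix (Fin 4) (Fin 4) R :=
  !![0, 0, 0, 1; 0, 0, -1, 0; 0, -1, 0, 0; 1, 0, 0, 0]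

theorem detPolarMatrix_mul_self (R : Type*) [CommRing R] :
    detPolarMatrix R * detPolarMatrix R = 1 := by
  ext i j
  fin_cases i <;> fin_cases j <;> simp [detPolarMatrix, Matrix.mul_apply, Fin.sum_univ_four]

theorem isUnit_det_detPolarMatrix (R : Type*) [CommRing R] : IsUnit (detPolarMatrix R).det :=
  isUnit_det_of_left_inverse (detPolarMatrix_mul_self R)

section Point

variable {m : ℕ} (x : (Fin m × Fin 2 × Fin 2) → ℂ)

def evalT : Matrix (Fin m) (Fin 4) ℂ :=
  Matrix.of fun k j => x (k, pairIdx j)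

variable {x}

theorem polar_eq_zero_of_mem_singSet (hx : x ∈ SingSet 2 m) (p q : Fin m) :
    x (p, 0, 0) * x (q, 1, 1) + x (p, 1, 1) * x (q, 0, 0)
      - x (p, 0, 1) * x (q, 1, 0) - x (p, 1, 0) * x (q, 0, 1) = 0 := by
  have hpq := hx (Pi.single p 1 + Pi.single q 1)
  have hp := hx (Pi.single p 1)
  have hq := hx (Pi.single q 1)
  simp only [det_fin_two, of_apply, Pi.add_apply, add_mul, Finset.sum_add_distrib,
    Pi.single_apply, ite_mul, one_mul, zero_mul, Finset.sum_ite_eq', Finset.mem_univ,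
    if_true] at hpq hp hq
  linear_combination hpq - hp - hq

theorem evalT_mul_detPolarMatrix_mul_transpose (hx : x ∈ SingSet 2 m) :
    evalT x * detPolarMatrix ℂ * (evalT x)ᵀ = 0 := by
  ext p q
  simp only [evalT, pairIdx, detPolarMatrix, Matrix.mul_apply, of_apply, cons_val',
    cons_val_fin_one, Fin.sum_univ_four, cons_val_zero, cons_val_one, cons_val, transpose_apply,
    mul_zero, add_zero, mul_one, zero_add, mul_neg, neg_mul, Matrix.zero_apply]
  linear_combination polar_eq_zero_of_mem_singSet hx p q

theorem rank_evalT_le_two (hx : x ∈ SingSet 2 m) :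
    (evalT x).rank ≤ 2 := by
  have := two_mul_rank_le_card_of_mul_mul_transpose_eq_zero (isUnit_det_detPolarMatrix ℂ)
    (evalT_mul_detPolarMatrix_mul_transpose hx)
  simp only [Fintype.card_fin] at this
  omega

end Point

theorem stmt4_general (m : ℕ) (r : Fin 3 → Fin m) (c : Fin 3 → Fin 4) :
    (Matrix.of fun a b : Fin 3 => MvPolynomial.X (r a, pairIdx (c b))).det
      ∈ singIdeal 2 m := by
  rw [singIdeal, mem_vanishingIdeal_iff]
  intro x hx
  have hminor : aeval x (Matrix.of fun a b : Fin 3 =>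
      (X (r a, pairIdx (c b)) : MvPolynomial _ ℂ)).det = ((evalT x).submatrix r c).det := by
    rw [AlgHom.map_det]
    congr 1
    ext a b
    simp [evalT]
  rw [hminor]
  apply det_submatrix_eq_zero_of_rank_lt
  rw [Fintype.card_fin]
  exact (rank_evalT_le_two hx).trans_lt (by norm_num)

theorem stmt4 (m : ℕ) (hm : 3 ≤ m) (r : Fin 3 → Fin m) (c : Fin 3 → Fin 4)
    (hr : Function.Injective r) (hc : Function.Injective c) :
    (Matrix.of fun a b : Fin 3 => MvPolynomial.X (r a, pairIdx (c b))).det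
      ∈ singIdeal 2 m :=
  stmt4_general m r c

end
end

section
/- Let m ≥ 1 and let (A_1,…,A_m) ∈ Sing_{2,m}, i.e. A_1,…,A_m are 2×2 complex matrices all of whose complex linear combinations are singular. Then the linear span of A_1,…,A_m in the space of 2×2 complex matrices has dimension at most 2. -/
/-!
On 2×2 matrices `det` is a quadratic form whose polar form is nondegenerate. A subspace
on which `det` vanishes is totally isotropic for that polar form (in any characteristic,
as `det (X + Y) = det X + det Y + polar X Y`), so it lies in its own orthogonal and its
dimension is at most half of 4.
-/

open Matrix Module

namespace LinearMap.BilinForm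

variable {K V : Type*} [Field K] [AddCommGroup V] [Module K V] [FiniteDimensional K V]

theorem two_mul_finrank_le_of_le_orthogonal {B : LinearMap.BilinForm K V}
    (hB : B.Nondegenerate) {W : Submodule K V} (hW : W ≤ B.orthogonal W) : 2 * finrank K W ≤ finrank K V := by
  have hmono := Submodule.finrank_mono hW
  rw [finrank_orthogonal hB] at hmono
  have := Submodule.finrank_le W
  omega

end LinearMap.BilinForm

namespace Matrix

variable (R : Type*) [CommRing R]

def detPolar : LinearMap.BilinForm R (Matrix (Fin 2) (Fin 2) R) :=
  LinearMap.mk₂ R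
    (fun X Y => X 0 0 * Y 1 1 + X 1 1 * Y 0 0 - X 0 1 * Y 1 0 - X 1 0 * Y 0 1)
    (by intros; simp only [add_apply]; ring)
    (by intros; simp only [smul_apply, smul_eq_mul]; ring)
    (by intros; simp only [add_apply]; ring)
    (by intros; simp only [smul_apply, smul_eq_mul]; ring)

variable {R}

theorem detPolar_apply (X Y : Matrix (Fin 2) (Fin 2) R) :
    detPolar R X Y = X 0 0 * Y 1 1 + X 1 1 * Y 0 0 - X 0 1 * Y 1 0 - X 1 0 * Y 0 1 :=
  rfl

theorem det_add_fin_two (X Y : Matrix (Fin 2) (Fin 2) R) :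
    (X + Y).det = X.det + Y.det + detPolar R X Y := by
  simp only [det_fin_two, detPolar_apply, add_apply]
  ring

theorem detPolar_isSymm : (detPolar R).IsSymm := by
  rw [LinearMap.BilinForm.isSymm_def]
  intro X Y
  simp only [detPolar_apply]
  ring

theorem detPolar_nondegenerate : (detPolar R).Nondegenerate := by
  refine (LinearMap.IsRefl.nondegenerate_iff_separatingLeft
    (detPolar_isSymm (R := R)).isRefl).2 ?_
  intro X hX
  have h00 : X 0 0 = 0 := by simpa [detPolar_apply, single] using hX (single 1 1 1)
  have h11 : X 1 1 = 0 := by simpa [detPolar_apply, single] using hX (single 0 0 1)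
  have h01 : X 0 1 = 0 := by simpa [detPolar_apply, single] using hX (single 1 0 1)
  have h10 : X 1 0 = 0 := by simpa [detPolar_apply, single] using hX (single 0 1 1)
  ext i j
  fin_cases i <;> fin_cases j <;> assumption

theorem le_detPolar_orthogonal_of_det_eq_zero {W : Submodule R (Matrix (Fin 2) (Fin 2) R)}
    (hW : ∀ X ∈ W, X.det = 0) : W ≤ (detPolar R).orthogonal W := by
  intro X hX Y hY
  have h := det_add_fin_two Y X
  rw [hW _ (W.add_mem hY hX), hW _ hY, hW _ hX, zero_add, zero_add] at h
  exact h.symm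

theorem finrank_le_two_of_forall_det_eq_zero {K : Type*} [Field K]
    {W : Submodule K (Matrix (Fin 2) (Fin 2) K)} (hW : ∀ X ∈ W, X.det = 0) :
    finrank K W ≤ 2 := by
  have := LinearMap.BilinForm.two_mul_finrank_le_of_le_orthogonal detPolar_nondegenerate
    (le_detPolar_orthogonal_of_det_eq_zero hW)
  rw [finrank_matrix, Fintype.card_fin, finrank_self] at this
  omega

end Matrix

theorem stmt5_general (m : ℕ) (A : Fin m → Matrix (Fin 2) (Fin 2) ℂ)
    (hA : ∀ lam : Fin m → ℂ, (∑ k : Fin m, lam k • A k).det = 0) :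
    Module.finrank ℂ (Submodule.span ℂ (Set.range A)) ≤ 2 := by
  refine finrank_le_two_of_forall_det_eq_zero fun X hX => ?_
  obtain ⟨lam, rfl⟩ := (Submodule.mem_span_range_iff_exists_fun ℂ).1 hX
  exact hA lam

theorem stmt5 (m : ℕ) (hm : 1 ≤ m) (A : Fin m → Matrix (Fin 2) (Fin 2) ℂ)
    (hA : ∀ lam : Fin m → ℂ, (∑ k : Fin m, lam k • A k).det = 0) :
    Module.finrank ℂ (Submodule.span ℂ (Set.range A)) ≤ 2 :=
  stmt5_general m A hA
end

section
/- Let m ≥ 1 and let (A_1,…,A_m) ∈ Sing_{2,m}, i.e. A_1,…,A_m are 2×2 complex matrices all of whose complex linear combinations are singular. Then either there exists a nonzero vector v ∈ ℂ² such that every column of every A_i is a scalar multiple of v (equivalently, the column space of every A_i is contained in ℂv), or there exists a nonzero vector w ∈ ℂ² such that every row of every A_i is a scalar multiple of w (equivalently, the row space of every A_i is contained in ℂw). -/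
/-!
A singular 2×2 matrix has rank at most one, so every nonzero `A i` factors as `u i * (w i)ᵀ`
with `u i, w i ≠ 0`. For such factorizations `det (u wᵀ + u' w'ᵀ) = det [u u'] * det [w w']`,
so the singularity of `A i + A j` forces `u i ∥ u j` or `w i ∥ w j`: the maps `i ↦ [u i]` and
`i ↦ [w i]` into the projective line agree on every pair in at least one coordinate. Two maps
with this property cannot both be nonconstant, which gives a common column or a common row line.
-/

open Matrix

noncomputable section

theorem forall_apply_eq_or_forall_apply_eq {ι α β : Type*} {f : ι → α} {g : ι → β}
    (h : ∀ i j, f i = f j ∨ g i = g j) : (∀ i j, f i = f j) ∨ (∀ i j, g i = g j) := by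
  refine or_iff_not_imp_left.mpr fun hf => ?_
  obtain ⟨i, j, hij⟩ : ∃ i j, f i ≠ f j := by simpa using hf
  have hg : ∀ k, g k = g i := fun k => by
    by_contra hk
    have hik := (h i k).resolve_right (Ne.symm hk)
    have hjk := (h j k).resolve_right fun hjk =>
      hk (hjk.symm.trans ((h i j).resolve_left hij).symm)
    exact hij (hik.trans hjk.symm)
  intro k l
  rw [hg k, hg l]

namespace Matrix

variable {K : Type*} [Field K]

theorem exists_eq_vecMulVec_of_det_eq_zero {A : Matrix (Fin 2) (Fin 2) K} (h : A.det = 0) :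
    ∃ u w : Fin 2 → K, A = vecMulVec u w := by
  by_cases h₀ : A 0 = 0
  · refine ⟨![0, 1], A 1, ?_⟩
    ext i j
    fin_cases i <;> simp [vecMulVec_apply, h₀]
  · have hdep : ¬LinearIndependent K ![A 0, A 1] := fun hli => by
      have := (isUnit_iff_isUnit_det A).mp (linearIndependent_rows_iff_isUnit.mp
        (by convert hli; ext i; fin_cases i <;> rfl))
      simp [h] at this
    obtain ⟨a, ha⟩ : ∃ a : K, a • A 0 = A 1 := by
      simpa [LinearIndependent.pair_iff' h₀] using hdep
    refine ⟨![1, a], A 0, ?_⟩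
    ext i j
    fin_cases i <;> simp [vecMulVec_apply, ← ha]

theorem det_vecMulVec_add_vecMulVec {R : Type*} [CommRing R] (u w u' w' : Fin 2 → R) :
    (vecMulVec u w + vecMulVec u' w').det = (of ![u, u']).det * (of ![w, w']).det := by
  rw [← det_transpose (of ![u, u']), ← det_mul]
  congr 1
  ext i j
  simp [mul_apply, vecMulVec_apply, Fin.sum_univ_two]

theorem exists_col_eq_smul_of_eq_vecMulVec {m n : Type*} {A : Matrix m n K} {v : m → K}
    {w : n → K} {a : K} (hA : A = vecMulVec (a • v) w) (j : n) :
    ∃ c : K, (fun r => A r j) = c • v :=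
  ⟨w j * a, funext fun r => by simp only [hA, vecMulVec_apply, Pi.smul_apply, smul_eq_mul]; ring⟩

theorem exists_row_eq_smul_of_eq_vecMulVec {m n : Type*} {A : Matrix m n K} {u : m → K}
    {v : n → K} {a : K} (hA : A = vecMulVec u (a • v)) (r : m) :
    ∃ c : K, (fun j => A r j) = c • v :=
  ⟨u r * a, funext fun j => by simp only [hA, vecMulVec_apply, Pi.smul_apply, smul_eq_mul]; ring⟩

end Matrix

namespace Projectivization

variable {K : Type*} [Field K]

theorem mk_eq_mk_iff_det_eq_zero {v w : Fin 2 → K} (hv : v ≠ 0) (hw : w ≠ 0) :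
    mk K v hv = mk K w hw ↔ (of ![v, w]).det = 0 := by
  rw [← not_iff_not, mk_eq_mk_iff', not_exists, ← LinearIndependent.pair_iff' hw,
    LinearIndependent.pair_symm_iff, ← ne_eq, ← isUnit_iff_ne_zero, ← isUnit_iff_isUnit_det,
    ← linearIndependent_rows_iff_isUnit]
  rfl

theorem mk_eq_mk_or_mk_eq_mk_of_det_vecMulVec_add_eq_zero {u w u' w' : Fin 2 → K}
    (hu : u ≠ 0) (hw : w ≠ 0) (hu' : u' ≠ 0) (hw' : w' ≠ 0)
    (h : (vecMulVec u w + vecMulVec u' w').det = 0) :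
    mk K u hu = mk K u' hu' ∨ mk K w hw = mk K w' hw' := by
  simpa only [mk_eq_mk_iff_det_eq_zero, det_vecMulVec_add_vecMulVec, mul_eq_zero] using h

end Projectivization

open Projectivization

theorem stmt7_general (m : ℕ) (A : Fin m → Matrix (Fin 2) (Fin 2) ℂ)
    (hA : ∀ lam : Fin m → ℂ, (∑ k : Fin m, lam k • A k).det = 0) :
    (∃ v : Fin 2 → ℂ, v ≠ 0 ∧
        ∀ i : Fin m, ∀ j : Fin 2, ∃ c : ℂ, (fun r => A i r j) = c • v) ∨
      (∃ w : Fin 2 → ℂ, w ≠ 0 ∧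
        ∀ i : Fin m, ∀ r : Fin 2, ∃ c : ℂ, (fun j => A i r j) = c • w) := by
  have hdet : ∀ i, (A i).det = 0 := fun i => by
    simpa using hA (Pi.single i 1)
  have hdet_add : ∀ i j, (A i + A j).det = 0 := fun i j => by
    have h := hA (Pi.single i 1 + Pi.single j 1 : Fin m → ℂ)
    simp only [Pi.add_apply, add_smul, Finset.sum_add_distrib, Fintype.sum_single_smul,
      one_smul] at h
    exact h
  by_cases hzero : ∀ i, A i = 0
  · exact Or.inl ⟨Pi.single 0 1, by simp, fun i j => ⟨0, funext fun r => by simp [hzero i]⟩⟩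
  obtain ⟨i₀, hi₀⟩ : ∃ i, A i ≠ 0 := by simpa using hzero
  choose u w huw using fun i : {i // A i ≠ 0} => exists_eq_vecMulVec_of_det_eq_zero (hdet i)
  have hu : ∀ i, u i ≠ 0 := fun i h => i.2 (by simp [huw, h])
  have hw : ∀ i, w i ≠ 0 := fun i h => i.2 (by simp [huw, h])
  rcases forall_apply_eq_or_forall_apply_eq (f := fun i => mk ℂ (u i) (hu i))
    (g := fun i => mk ℂ (w i) (hw i)) fun i j =>
      mk_eq_mk_or_mk_eq_mk_of_det_vecMulVec_add_eq_zero _ _ _ _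
        (huw i ▸ huw j ▸ hdet_add i j) with hcol | hrow
  · refine Or.inl ⟨u ⟨i₀, hi₀⟩, hu _, fun i => ?_⟩
    by_cases hi : A i = 0
    · exact fun j => ⟨0, funext fun r => by simp [hi]⟩
    obtain ⟨a, ha⟩ := (mk_eq_mk_iff' ..).mp (hcol ⟨i, hi⟩ ⟨i₀, hi₀⟩)
    exact exists_col_eq_smul_of_eq_vecMulVec (ha ▸ huw ⟨i, hi⟩)
  · refine Or.inr ⟨w ⟨i₀, hi₀⟩, hw _, fun i => ?_⟩
    by_cases hi : A i = 0
    · exact fun r => ⟨0, funext fun j => by simp [hi]⟩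
    obtain ⟨a, ha⟩ := (mk_eq_mk_iff' ..).mp (hrow ⟨i, hi⟩ ⟨i₀, hi₀⟩)
    exact exists_row_eq_smul_of_eq_vecMulVec (ha ▸ huw ⟨i, hi⟩)

theorem stmt7 (m : ℕ) (hm : 1 ≤ m) (A : Fin m → Matrix (Fin 2) (Fin 2) ℂ)
    (hA : ∀ lam : Fin m → ℂ, (∑ k : Fin m, lam k • A k).det = 0) :
    (∃ v : Fin 2 → ℂ, v ≠ 0 ∧
        ∀ i : Fin m, ∀ j : Fin 2, ∃ c : ℂ, (fun r => A i r j) = c • v) ∨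
      (∃ w : Fin 2 → ℂ, w ≠ 0 ∧
        ∀ i : Fin m, ∀ r : Fin 2, ∃ c : ℂ, (fun j => A i r j) = c • w) :=
  stmt7_general m A hA

end
end
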